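/- arXiv:1905.00717 — 6 statements merged into one kernel-verified Lean document; each statement's English description precedes it below -/
import Mathlib

section
/- For all complex x, y with |x| < 1/(1−q) and |y| < 1/(1−q), the series ∑_{n=0}^∞ (x ⊕_q y)^n/[n]_q! converges absolutely and e_q(x) · e_q(y) = ∑_{n=0}^∞ (x ⊕_q y)^n/[n]_q!. -/
open Finset

/-- The q-number `[n]_q = (1 - q^n)/(1 - q)`. -/
noncomputable def qNum (q : ℝ) (n : ℕ) : ℝ := (1 - q ^ n) / (1 - q)

/-- The q-factorial `[n]_q! = ∏_{k=1}^n [k]_q`. -/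
noncomputable def qFact (q : ℝ) (n : ℕ) : ℝ := ∏ k ∈ Finset.range n, qNum q (k + 1)

/-- The q-binomial coefficient `[n choose k]_q`. -/
noncomputable def qBinom (q : ℝ) (n k : ℕ) : ℝ := qFact q n / (qFact q k * qFact q (n - k))

/-- The Ward q-addition power `(x ⊕_q y)^n = ∑_{k=0}^n [n choose k]_q x^k y^(n-k)`. -/
noncomputable def wardPow (q : ℝ) (x y : ℂ) (n : ℕ) : ℂ :=
  ∑ k ∈ Finset.range (n + 1), (qBinom q n k : ℂ) * x ^ k * y ^ (n - k)

/-- The q-exponential `e_q(z) = ∑ z^n/[n]_q!`. -/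
noncomputable def qExp (q : ℝ) (z : ℂ) : ℂ := ∑' n : ℕ, z ^ n / (qFact q n : ℂ)

/-! The q-exponential series passes the ratio test on the disc `‖z‖ < 1/(1-q)`, because
`[n]_q → 1/(1-q)`. Dividing the Ward power by `[n]_q!` cancels the numerator of the q-binomial
coefficient, so `(x ⊕_q y)^n/[n]_q!` is the `n`-th Cauchy product term of the series of `e_q(x)`
and `e_q(y)`, and Mertens' theorem for absolutely convergent series does the rest. -/

open Filter Topology

section

variable {q : ℝ}

lemma one_sub_pos_of_abs_lt_one (hq : |q| < 1) : 0 < 1 - q :=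
  sub_pos.2 ((le_abs_self q).trans_lt hq)

lemma qNum_succ_pos (hq : |q| < 1) (n : ℕ) : 0 < qNum q (n + 1) := by
  have hpow : q ^ (n + 1) < 1 :=
    (le_abs_self _).trans_lt (abs_pow q (n + 1) ▸ pow_lt_one₀ (abs_nonneg q) hq n.succ_ne_zero)
  exact div_pos (sub_pos.2 hpow) (one_sub_pos_of_abs_lt_one hq)

lemma qFact_pos (hq : |q| < 1) (n : ℕ) : 0 < qFact q n :=
  prod_pos fun k _ => qNum_succ_pos hq k

lemma qFact_succ (n : ℕ) : qFact q (n + 1) = qFact q n * qNum q (n + 1) :=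
  prod_range_succ _ _

lemma tendsto_qNum (hq : |q| < 1) : Tendsto (qNum q) atTop (𝓝 (1 / (1 - q))) := by
  have h := ((tendsto_pow_atTop_nhds_zero_of_abs_lt_one hq).const_sub 1).div_const (1 - q)
  rw [sub_zero] at h
  exact h

lemma norm_pow_div_qFact_succ (hq : |q| < 1) (z : ℂ) (n : ℕ) :
    ‖z ^ (n + 1) / (qFact q (n + 1) : ℂ)‖ = ‖z‖ / qNum q (n + 1) * ‖z ^ n / (qFact q n : ℂ)‖ := by
  rw [qFact_succ, Complex.ofReal_mul, pow_succ, mul_div_mul_comm, norm_mul, mul_comm, norm_div z,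
    Complex.norm_real, Real.norm_of_nonneg (qNum_succ_pos hq n).le]

lemma summable_norm_pow_div_qFact (hq : |q| < 1) {z : ℂ} (hz : ‖z‖ < 1 / (1 - q)) :
    Summable fun n => ‖z ^ n / (qFact q n : ℂ)‖ := by
  have hq' := one_sub_pos_of_abs_lt_one hq
  have hratio : Tendsto (fun n => ‖z‖ / qNum q (n + 1)) atTop (𝓝 ((1 - q) * ‖z‖)) := by
    have h := (tendsto_const_nhds (x := ‖z‖)).div
      ((tendsto_qNum hq).comp (tendsto_add_atTop_nat 1)) (one_div_pos.2 hq').ne'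
    rw [div_div_eq_mul_div, div_one, mul_comm] at h
    exact h
  obtain ⟨r, hzr, hr1⟩ := exists_between (show (1 - q) * ‖z‖ < 1 by
    rwa [lt_div_iff₀ hq', mul_comm] at hz)
  refine summable_of_ratio_norm_eventually_le hr1 ?_
  filter_upwards [hratio.eventually (ge_mem_nhds hzr)] with n hn
  rw [norm_norm, norm_norm, norm_pow_div_qFact_succ hq]
  exact mul_le_mul_of_nonneg_right hn (norm_nonneg _)

lemma wardPow_div_qFact {n : ℕ} (hn : qFact q n ≠ 0) (x y : ℂ) :
    wardPow q x y n / (qFact q n : ℂ) =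
      ∑ k ∈ range (n + 1), x ^ k / (qFact q k : ℂ) * (y ^ (n - k) / (qFact q (n - k) : ℂ)) := by
  have hn' : (qFact q n : ℂ) ≠ 0 := Complex.ofReal_ne_zero.2 hn
  rw [wardPow, sum_div]
  refine sum_congr rfl fun k _ => ?_
  rw [qBinom, Complex.ofReal_div, Complex.ofReal_mul]
  field_simp

end

theorem stmt_1 (q : ℝ) (hq0 : 0 < q) (hq1 : q < 1) (x y : ℂ)
    (hx : ‖x‖ < 1 / (1 - q)) (hy : ‖y‖ < 1 / (1 - q)) :
    Summable (fun n : ℕ => ‖wardPow q x y n / (qFact q n : ℂ)‖) ∧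
      qExp q x * qExp q y = ∑' n : ℕ, wardPow q x y n / (qFact q n : ℂ) := by
  have hq : |q| < 1 := abs_lt.2 ⟨by linarith, hq1⟩
  have hx' := summable_norm_pow_div_qFact hq hx
  have hy' := summable_norm_pow_div_qFact hq hy
  have hcauchy (n : ℕ) := wardPow_div_qFact (qFact_pos hq n).ne' x y
  simp only [hcauchy, qExp]
  exact ⟨summable_norm_sum_mul_range_of_summable_norm (f := fun n => x ^ n / (qFact q n : ℂ))
      (g := fun n => y ^ n / (qFact q n : ℂ)) hx' hy',
    tsum_mul_tsum_eq_tsum_sum_range_of_summable_norm hx' hy'⟩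
end

section
/- For all complex a, b, r, s with |a| < |r| and |b| < |s|, the series ∑_{n=0}^∞ (−1)^n ∑_{k=0}^{2n+1} a^k b^{2n+1−k}/(r^{k+1} s^{2n+2−k}) converges absolutely and equals (as + br)/((r² + a²)(s² + b²)). -/
/-!
With `x = a / r` and `y = b / s`, the `n`-th term is `(-1)^n / (r s)` times the
two-variable geometric sum `∑_{k ≤ 2n+1} x^k y^{2n+1-k}`. Pairing the indices `2i` and
`2i + 1` factors out `x + y`, so the term is `(x + y)/(r s) · ∑_{i ≤ n} (-x²)^i (-y²)^(n-i)`: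
the Cauchy product of two geometric series of ratios `-x²` and `-y²`, both of norm `< 1`.
Its sum is `(x + y) / (r s (1 + x²)(1 + y²))`.
-/

open Finset

lemma Finset.sum_range_two_mul {M : Type*} [AddCommMonoid M] (m : ℕ) (f : ℕ → M) :
    ∑ k ∈ range (2 * m), f k = ∑ i ∈ range m, (f (2 * i) + f (2 * i + 1)) := by
  induction m with
  | zero => simp
  | succ m ih =>
    rw [show 2 * (m + 1) = 2 * m + 1 + 1 by ring, sum_range_succ, sum_range_succ, ih,
      sum_range_succ, add_assoc]

lemma geom_sum₂_two_mul_add_two {R : Type*} [CommSemiring R] (x y : R) (n : ℕ) :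
    ∑ k ∈ range (2 * n + 2), x ^ k * y ^ (2 * n + 1 - k) =
      (x + y) * ∑ i ∈ range (n + 1), (x ^ 2) ^ i * (y ^ 2) ^ (n - i) := by
  rw [show 2 * n + 2 = 2 * (n + 1) by ring, sum_range_two_mul, mul_sum]
  refine sum_congr rfl fun i hi => ?_
  obtain ⟨j, rfl⟩ := Nat.exists_eq_add_of_le (Nat.lt_succ_iff.mp (mem_range.mp hi))
  rw [show 2 * (i + j) + 1 - 2 * i = 2 * j + 1 by omega,
    show 2 * (i + j) + 1 - (2 * i + 1) = 2 * j by omega, show i + j - i = j by omega]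
  ring

lemma neg_one_pow_mul_sum_range_pow_mul_pow {R : Type*} [CommRing R] (u v : R) (n : ℕ) :
    (-1) ^ n * ∑ i ∈ range (n + 1), u ^ i * v ^ (n - i) =
      ∑ i ∈ range (n + 1), (-u) ^ i * (-v) ^ (n - i) := by
  rw [mul_sum]
  refine sum_congr rfl fun i hi => ?_
  obtain ⟨j, rfl⟩ := Nat.exists_eq_add_of_le (Nat.lt_succ_iff.mp (mem_range.mp hi))
  rw [show i + j - i = j by omega, neg_pow u, neg_pow v]
  ring

section GeometricCauchyProduct

variable {K : Type*} [NormedField K] {u v : K}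

lemma summable_norm_sum_range_pow_mul_pow (hu : ‖u‖ < 1) (hv : ‖v‖ < 1) :
    Summable fun n => ‖∑ i ∈ range (n + 1), u ^ i * v ^ (n - i)‖ :=
  summable_norm_sum_mul_range_of_summable_norm (summable_norm_geometric_of_norm_lt_one hu)
    (summable_norm_geometric_of_norm_lt_one hv)

lemma hasSum_sum_range_pow_mul_pow [CompleteSpace K] (hu : ‖u‖ < 1) (hv : ‖v‖ < 1) :
    HasSum (fun n => ∑ i ∈ range (n + 1), u ^ i * v ^ (n - i))
      ((1 - u)⁻¹ * (1 - v)⁻¹) := by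
  rw [← tsum_geometric_of_norm_lt_one hu, ← tsum_geometric_of_norm_lt_one hv]
  exact hasSum_sum_range_mul_of_summable_norm (summable_norm_geometric_of_norm_lt_one hu)
    (summable_norm_geometric_of_norm_lt_one hv)

end GeometricCauchyProduct

section NormLt

variable {K : Type*} [NormedField K] {a r : K}

lemma ne_zero_of_norm_lt (h : ‖a‖ < ‖r‖) : r ≠ 0 :=
  norm_pos_iff.mp ((norm_nonneg a).trans_lt h)

lemma norm_div_lt_one_of_norm_lt (h : ‖a‖ < ‖r‖) : ‖a / r‖ < 1 := by
  rw [norm_div]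
  exact (div_lt_one ((norm_nonneg a).trans_lt h)).2 h

lemma norm_neg_div_sq_lt_one_of_norm_lt (h : ‖a‖ < ‖r‖) : ‖-(a / r) ^ 2‖ < 1 := by
  rw [norm_neg, norm_pow]
  exact pow_lt_one₀ (norm_nonneg _) (norm_div_lt_one_of_norm_lt h) two_ne_zero

lemma sq_add_sq_ne_zero_of_norm_lt (h : ‖a‖ < ‖r‖) : r ^ 2 + a ^ 2 ≠ 0 := by
  intro h0
  have : ‖a‖ ^ 2 = ‖r‖ ^ 2 := by
    rw [← norm_pow, eq_neg_of_add_eq_zero_right h0, norm_neg, norm_pow]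
  nlinarith [norm_nonneg a]

end NormLt

lemma div_mul_pow_sub_eq_div_pow_mul_div_pow {K : Type*} [Field K] {a b r s : K} (hr : r ≠ 0)
    (hs : s ≠ 0) {k m : ℕ} (hk : k ≤ m) :
    a ^ k * b ^ (m - k) / (r ^ (k + 1) * s ^ (m + 1 - k)) =
      (a / r) ^ k * (b / s) ^ (m - k) / (r * s) := by
  rw [Nat.sub_add_comm hk, div_pow, div_pow]
  field_simp
  ring

theorem stmt_8 (a b r s : ℂ) (ha : ‖a‖ < ‖r‖)
    (hb : ‖b‖ < ‖s‖) :
    Summable (fun n : ℕ =>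
        ‖(-1 : ℂ) ^ n * ∑ k ∈ Finset.range (2 * n + 2),
            a ^ k * b ^ (2 * n + 1 - k) / (r ^ (k + 1) * s ^ (2 * n + 2 - k))‖) ∧
      ∑' n : ℕ, ((-1 : ℂ) ^ n * ∑ k ∈ Finset.range (2 * n + 2),
          a ^ k * b ^ (2 * n + 1 - k) / (r ^ (k + 1) * s ^ (2 * n + 2 - k))) =
        (a * s + b * r) / ((r ^ 2 + a ^ 2) * (s ^ 2 + b ^ 2)) := by
  have hr := ne_zero_of_norm_lt ha
  have hs := ne_zero_of_norm_lt hb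
  have term : ∀ n : ℕ, (-1 : ℂ) ^ n * ∑ k ∈ range (2 * n + 2),
      a ^ k * b ^ (2 * n + 1 - k) / (r ^ (k + 1) * s ^ (2 * n + 2 - k)) =
        (a / r + b / s) / (r * s) *
          ∑ i ∈ range (n + 1), (-(a / r) ^ 2) ^ i * (-(b / s) ^ 2) ^ (n - i) := by
    intro n
    rw [sum_congr rfl fun k hk => div_mul_pow_sub_eq_div_pow_mul_div_pow hr hs
      (Nat.lt_succ_iff.mp (mem_range.mp hk)), ← sum_div, geom_sum₂_two_mul_add_two,
      ← neg_one_pow_mul_sum_range_pow_mul_pow]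
    ring
  have hu := norm_neg_div_sq_lt_one_of_norm_lt ha
  have hv := norm_neg_div_sq_lt_one_of_norm_lt hb
  refine ⟨?_, ?_⟩
  · simpa only [term, norm_mul] using (summable_norm_sum_range_pow_mul_pow hu hv).mul_left _
  · rw [tsum_congr term, ((hasSum_sum_range_pow_mul_pow hu hv).mul_left _).tsum_eq]
    have hra := sq_add_sq_ne_zero_of_norm_lt ha
    have hsb := sq_add_sq_ne_zero_of_norm_lt hb
    rw [sub_neg_eq_add, sub_neg_eq_add, div_pow, div_pow, one_add_div (pow_ne_zero 2 hr),
      one_add_div (pow_ne_zero 2 hs)]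
    field_simp
end

section
/- Let (a_n)_{n≥0} be a sequence of complex numbers whose power series H(u) = ∑_{n=0}^∞ a_n u^n has radius of convergence ρ, and let α, β, r, s be complex numbers with r ≠ 0, s ≠ 0, αs ≠ βr, |α/r| < ρ and |β/s| < ρ. Then the double series ∑_{n=0}^∞ ∑_{k=0}^n a_n α^k β^{n−k}/(r^{k+1} s^{n+1−k}) converges and equals (1/(αs − βr)) · (F(α/r) − F(β/s)), where F(u) = ∑_{n=0}^∞ a_n u^{n+1}. -/
open scoped ENNReal

/-!
With `x = α / r` and `y = β / s`, the `n`-th inner sum is `(∑_{k ≤ n} x^k y^{n-k}) / (r s)`,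
and `(x - y) r s = α s - β r`, so the two-variable geometric sum collapses it to
`(x^{n+1} - y^{n+1}) / (α s - β r)`. The double series is therefore the difference of two
power series evaluated inside their disc of convergence, divided by `α s - β r`.
-/

lemma summable_mul_pow_succ_of_lt_radius {𝕜 : Type*} [NontriviallyNormedField 𝕜]
    [CompleteSpace 𝕜] {a : ℕ → 𝕜} {z : 𝕜}
    (hz : (‖z‖₊ : ℝ≥0∞) < (FormalMultilinearSeries.ofScalars 𝕜 a).radius) :
    Summable fun n => a n * z ^ (n + 1) := by
  have hmem : z ∈ Metric.eball (0 : 𝕜) (FormalMultilinearSeries.ofScalars 𝕜 a).radius := by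
    rwa [Metric.mem_eball, edist_zero_right, enorm_eq_nnnorm]
  have hsum : Summable fun n => a n * z ^ n := by
    simpa only [FormalMultilinearSeries.ofScalars_apply_eq, smul_eq_mul] using
      (FormalMultilinearSeries.ofScalars 𝕜 a).summable hmem
  simpa only [pow_succ, mul_assoc] using hsum.mul_right z

lemma sum_range_pow_div_pow_mul_pow {K : Type*} [Field K] {α β r s : K}
    (hr : r ≠ 0) (hs : s ≠ 0) (h : α * s ≠ β * r) (n : ℕ) :
    ∑ k ∈ Finset.range (n + 1), α ^ k * β ^ (n - k) / (r ^ (k + 1) * s ^ (n + 1 - k)) =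
      ((α / r) ^ (n + 1) - (β / s) ^ (n + 1)) / (α * s - β * r) := by
  have hterm : ∀ k ∈ Finset.range (n + 1),
      α ^ k * β ^ (n - k) / (r ^ (k + 1) * s ^ (n + 1 - k)) =
        (α / r) ^ k * (β / s) ^ (n - k) / (r * s) := by
    intro k hk
    rw [show n + 1 - k = n - k + 1 by grind, div_pow, div_pow]
    field_simp
    ring
  have hdiff : (α / r - β / s) * (r * s) = α * s - β * r := by
    field_simp
  have hxy : α / r - β / s ≠ 0 := fun h0 => sub_ne_zero.mpr h (by rw [← hdiff, h0, zero_mul])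
  have hgeom := geom_sum₂_mul (α / r) (β / s) (n + 1)
  rw [Nat.add_sub_cancel] at hgeom
  rw [Finset.sum_congr rfl hterm, ← Finset.sum_div, ← hdiff, ← hgeom,
    mul_comm (α / r - β / s), mul_div_mul_right _ _ hxy]

theorem stmt_11 (a : ℕ → ℂ) (ρ : ℝ≥0∞)
    (hρ : (FormalMultilinearSeries.ofScalars ℂ a).radius = ρ)
    (α β r s : ℂ) (hr : r ≠ 0) (hs : s ≠ 0) (h : α * s ≠ β * r)
    (hα : (‖α / r‖₊ : ℝ≥0∞) < ρ) (hβ : (‖β / s‖₊ : ℝ≥0∞) < ρ) :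
    HasSum
      (fun n : ℕ => a n *
        ∑ k ∈ Finset.range (n + 1), α ^ k * β ^ (n - k) / (r ^ (k + 1) * s ^ (n + 1 - k)))
      ((1 / (α * s - β * r)) *
        ((∑' n : ℕ, a n * (α / r) ^ (n + 1)) - ∑' n : ℕ, a n * (β / s) ^ (n + 1))) := by
  subst hρ
  have hx := (summable_mul_pow_succ_of_lt_radius hα).hasSum
  have hy := (summable_mul_pow_succ_of_lt_radius hβ).hasSum
  have hterm : (fun n : ℕ => a n *
      ∑ k ∈ Finset.range (n + 1), α ^ k * β ^ (n - k) / (r ^ (k + 1) * s ^ (n + 1 - k))) =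
      fun n => (a n * (α / r) ^ (n + 1) - a n * (β / s) ^ (n + 1)) / (α * s - β * r) := by
    funext n
    rw [sum_range_pow_div_pow_mul_pow hr hs h, mul_div_assoc', mul_sub]
  rw [hterm, one_div_mul_eq_div]
  exact (hx.sub hy).div_const _
end

section
/- For every n ∈ ℕ, all nonzero complex r, s and all complex a, b with br ≠ as, one has ∑_{k=0}^n [n choose k]_q q^{k(k−n)} a^k b^{n−k} · ([k]_q!/(q^{k(k+1)/2} r^{k+1})) · ([n−k]_q!/(q^{(n−k)(n−k+1)/2} s^{n−k+1})) = (q^{−n(n+1)/2} [n]_q!/(br − as)) · ((b/s)^{n+1} − (a/r)^{n+1}). -/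
open Finset

/-! The q-binomial coefficient cancels the two q-factorials produced by the transform, and since
`k(k-n) + n(n+1)/2 = k(k+1)/2 + (n-k)(n-k+1)/2` the powers of `q` collapse to `q^(-n(n+1)/2)`,
so the `k`-th term is `[n]_q! q^(-n(n+1)/2) (rs)⁻¹ (a/r)^k (b/s)^(n-k)`. The sum over `k` is then
the geometric sum `∑ x^k y^(n-k) = (x^(n+1) - y^(n+1)) / (x - y)` with `x = a/r`, `y = b/s`,
and `x ≠ y` is exactly `br ≠ as`. -/

lemma qNum_succ_pos_s12 {q : ℝ} (hq0 : 0 ≤ q) (hq1 : q < 1) (m : ℕ) : 0 < qNum q (m + 1) :=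
  div_pos (sub_pos.2 (pow_lt_one₀ hq0 hq1 m.succ_ne_zero)) (sub_pos.2 hq1)

lemma qFact_pos_s12 {q : ℝ} (hq0 : 0 ≤ q) (hq1 : q < 1) (m : ℕ) : 0 < qFact q m :=
  prod_pos fun k _ => qNum_succ_pos_s12 hq0 hq1 k

lemma qBinom_mul_qFact_mul_qFact {q : ℝ} {n k : ℕ} (hk : qFact q k ≠ 0)
    (hnk : qFact q (n - k) ≠ 0) : qBinom q n k * qFact q k * qFact q (n - k) = qFact q n := by
  rw [qBinom, mul_assoc, div_mul_cancel₀ _ (mul_ne_zero hk hnk)]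

lemma triangle_add (k m : ℕ) :
    (k + m) * (k + m + 1) / 2 = k * (k + 1) / 2 + m * (m + 1) / 2 + k * m := by
  obtain ⟨a, ha⟩ := Nat.even_mul_succ_self k
  obtain ⟨b, hb⟩ := Nat.even_mul_succ_self m
  rw [show (k + m) * (k + m + 1) = k * (k + 1) + m * (m + 1) + 2 * (k * m) by ring, ha, hb]
  omega

lemma zpow_mul_pow_triangle {G₀ : Type*} [GroupWithZero G₀] {x : G₀} (hx : x ≠ 0) {n k : ℕ}
    (hk : k ≤ n) :
    x ^ ((k : ℤ) * ((k : ℤ) - (n : ℤ))) * x ^ (n * (n + 1) / 2) =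
      x ^ (k * (k + 1) / 2) * x ^ ((n - k) * (n - k + 1) / 2) := by
  obtain ⟨m, rfl⟩ := Nat.exists_eq_add_of_le hk
  simp only [← zpow_natCast, ← zpow_add₀ hx, Nat.add_sub_cancel_left, triangle_add]
  congr 1
  push_cast
  ring

lemma qCoadd_term_transform {q : ℝ} (hq0 : 0 < q) (hq1 : q < 1) {n k : ℕ} (hk : k ≤ n)
    {r s : ℂ} (hr : r ≠ 0) (hs : s ≠ 0) (a b : ℂ) :
    (qBinom q n k : ℂ) * (q : ℂ) ^ ((k : ℤ) * ((k : ℤ) - (n : ℤ))) * a ^ k * b ^ (n - k) *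
        ((qFact q k : ℂ) / ((q : ℂ) ^ (k * (k + 1) / 2) * r ^ (k + 1))) *
        ((qFact q (n - k) : ℂ) / ((q : ℂ) ^ ((n - k) * (n - k + 1) / 2) * s ^ (n - k + 1))) =
      (qFact q n : ℂ) / ((q : ℂ) ^ (n * (n + 1) / 2) * (r * s)) *
        ((a / r) ^ k * (b / s) ^ (n - k)) := by
  have hq : (q : ℂ) ≠ 0 := by exact_mod_cast hq0.ne'
  have hfact : (qBinom q n k : ℂ) * qFact q k * qFact q (n - k) = qFact q n := by
    exact_mod_cast qBinom_mul_qFact_mul_qFact (qFact_pos_s12 hq0.le hq1 k).ne'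
      (qFact_pos_s12 hq0.le hq1 (n - k)).ne'
  have hpow := zpow_mul_pow_triangle hq hk
  rw [← hfact, div_pow, div_pow, pow_succ r, pow_succ s]
  field_simp
  linear_combination (qBinom q n k * qFact q k * qFact q (n - k) * a ^ k * b ^ (n - k) : ℂ) * hpow

theorem stmt_12 (q : ℝ) (hq0 : 0 < q) (hq1 : q < 1) (n : ℕ) (r s a b : ℂ)
    (hr : r ≠ 0) (hs : s ≠ 0) (h : b * r ≠ a * s) :
    ∑ k ∈ Finset.range (n + 1),
        (qBinom q n k : ℂ) * (q : ℂ) ^ ((k : ℤ) * ((k : ℤ) - (n : ℤ))) * a ^ k * b ^ (n - k) *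
          ((qFact q k : ℂ) / ((q : ℂ) ^ (k * (k + 1) / 2) * r ^ (k + 1))) *
          ((qFact q (n - k) : ℂ) / ((q : ℂ) ^ ((n - k) * (n - k + 1) / 2) * s ^ (n - k + 1))) =
      (qFact q n : ℂ) / ((q : ℂ) ^ (n * (n + 1) / 2) * (b * r - a * s)) *
        ((b / s) ^ (n + 1) - (a / r) ^ (n + 1)) := by
  have hxy : a / r ≠ b / s := by
    rwa [ne_eq, div_eq_div_iff hr hs, eq_comm]
  rw [sum_congr rfl fun k hk =>
      qCoadd_term_transform hq0 hq1 (Nat.lt_succ_iff.1 (mem_range.1 hk)) hr hs a b,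
    ← mul_sum]
  have hgeom := (Commute.all (a / r) (b / s)).geom_sum₂ hxy (n + 1)
  simp only [Nat.add_sub_cancel] at hgeom
  rw [hgeom, show a / r - b / s = -(b * r - a * s) / (r * s) by field_simp; ring]
  field_simp
  ring
end

section
/- For all complex a, b, r, s with |a| < q|r| and |b| < q|s|, the series ∑_{n=0}^∞ (−1)^n q^{−2n} ∑_{k=0}^{2n} a^k b^{2n−k}/(r^{k+1} s^{2n−k+1}) converges absolutely and equals q²(q²rs − ab)/((q²r² + a²)(q²s² + b²)). -/
/-!
With `w = I a / (q r)` and `z = I b / (q s)`, the `n`-th term of the series is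
`(r s)⁻¹ h_{2n}(w, z)`, where `h_m(w, z) = ∑_{k ≤ m} w^k z^(m-k)`; the sign `(-1)^n` is absorbed
by `I^(2n)`. The hypotheses say exactly `‖w‖, ‖z‖ < 1`. Then `∑ h_m(w, z)` is the Cauchy product
of two geometric series, hence absolutely convergent with sum `(1 - w)⁻¹ (1 - z)⁻¹`, and since
`h_m(-w, -z) = (-1)^m h_m(w, z)` its even part sums to
`((1 - w)⁻¹ (1 - z)⁻¹ + (1 + w)⁻¹ (1 + z)⁻¹) / 2 = (1 + w z) / ((1 - w²) (1 - z²))`.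
Substituting back gives the closed form.
-/

open Finset Complex

section

variable {R : Type*}

def hsymm₂ [CommSemiring R] (w z : R) (m : ℕ) : R :=
  ∑ k ∈ range (m + 1), w ^ k * z ^ (m - k)

theorem hsymm₂_neg [CommRing R] (w z : R) (m : ℕ) :
    hsymm₂ (-w) (-z) m = (-1) ^ m * hsymm₂ w z m := by
  rw [hsymm₂, hsymm₂, mul_sum]
  refine sum_congr rfl fun k hk => ?_
  obtain ⟨j, rfl⟩ := Nat.exists_eq_add_of_le (mem_range_succ_iff.mp hk)
  rw [Nat.add_sub_cancel_left, neg_pow, neg_pow, pow_add]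
  ring

end

section

variable {𝕜 : Type*} [NormedField 𝕜] {w z : 𝕜}

theorem summable_norm_hsymm₂ (hw : ‖w‖ < 1) (hz : ‖z‖ < 1) :
    Summable fun m => ‖hsymm₂ w z m‖ :=
  summable_norm_sum_mul_range_of_summable_norm
    (summable_norm_geometric_of_norm_lt_one hw) (summable_norm_geometric_of_norm_lt_one hz)

theorem hasSum_hsymm₂ [CompleteSpace 𝕜] (hw : ‖w‖ < 1) (hz : ‖z‖ < 1) :
    HasSum (hsymm₂ w z) ((1 - w)⁻¹ * (1 - z)⁻¹) := by
  have h := hasSum_sum_range_mul_of_summable_norm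
    (summable_norm_geometric_of_norm_lt_one hw) (summable_norm_geometric_of_norm_lt_one hz)
  rwa [tsum_geometric_of_norm_lt_one hw, tsum_geometric_of_norm_lt_one hz] at h

theorem HasSum.comp_two_mul_of_neg_one_pow_mul [CharZero 𝕜] {f : ℕ → 𝕜} {a b : 𝕜}
    (hf : HasSum f a) (hg : HasSum (fun n => (-1) ^ n * f n) b) :
    HasSum (fun n => f (2 * n)) ((a + b) / 2) := by
  have h := (hf.add hg).div_const 2
  have hodd : ∀ n ∉ Set.range (2 * ·), (f n + (-1) ^ n * f n) / 2 = 0 := by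
    intro n hn
    obtain ⟨k, rfl⟩ : Odd n := by
      rw [← Nat.not_even_iff_odd]
      rintro ⟨k, rfl⟩
      exact hn ⟨k, two_mul k⟩
    simp [pow_succ, pow_mul]
  rw [← (mul_right_injective₀ two_ne_zero).hasSum_iff hodd] at h
  convert h using 2 with n
  simp [pow_mul]

theorem hasSum_hsymm₂_two_mul [CompleteSpace 𝕜] [CharZero 𝕜] (hw : ‖w‖ < 1) (hz : ‖z‖ < 1) :
    HasSum (fun n => hsymm₂ w z (2 * n)) ((1 + w * z) / ((1 - w ^ 2) * (1 - z ^ 2))) := by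
  have hneg := hasSum_hsymm₂ (w := -w) (z := -z) (by rwa [norm_neg]) (by rwa [norm_neg])
  rw [show hsymm₂ (-w) (-z) = fun m => (-1) ^ m * hsymm₂ w z m from
    funext (hsymm₂_neg w z)] at hneg
  convert (hasSum_hsymm₂ hw hz).comp_two_mul_of_neg_one_pow_mul hneg using 1
  have ne_one {x : 𝕜} (hx : ‖x‖ < 1) : 1 - x ≠ 0 := by
    intro h; rw [sub_eq_zero] at h; simp [← h] at hx
  have h1w := ne_one hw
  have h1z := ne_one hz
  have h2w : 1 + w ≠ 0 := by simpa using ne_one (x := -w) (by rwa [norm_neg])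
  have h2z : 1 + z ≠ 0 := by simpa using ne_one (x := -z) (by rwa [norm_neg])
  rw [sub_neg_eq_add, sub_neg_eq_add,
    show (1 - w ^ 2) * (1 - z ^ 2) = (1 - w) * (1 + w) * ((1 - z) * (1 + z)) by ring]
  field_simp
  ring

end

theorem neg_one_pow_mul_inv_mul_sum_eq_hsymm₂ (q a b r s : ℂ) (hq : q ≠ 0) (hr : r ≠ 0)
    (hs : s ≠ 0) (n : ℕ) :
    (-1) ^ n * (q ^ (2 * n))⁻¹ * ∑ k ∈ range (2 * n + 1),
        a ^ k * b ^ (2 * n - k) / (r ^ (k + 1) * s ^ (2 * n - k + 1)) =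
      (r * s)⁻¹ * hsymm₂ (I * a / (q * r)) (I * b / (q * s)) (2 * n) := by
  rw [hsymm₂, mul_sum, mul_sum]
  refine sum_congr rfl fun k hk => ?_
  set m := 2 * n - k
  have hkm : k + m = 2 * n := Nat.add_sub_cancel' (mem_range_succ_iff.mp hk)
  have hsign : (-1 : ℂ) ^ n = I ^ k * I ^ m := by rw [← pow_add, hkm, pow_mul, I_sq]
  rw [hsign, ← hkm, pow_add]
  simp only [div_pow, mul_pow]
  field_simp
  ring

/-- When `q ^ 2 * r ^ 2 + a ^ 2 = 0` both sides are `0`, by the convention `x / 0 = 0`. -/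
theorem inv_mul_one_add_mul_div_eq (q a b r s : ℂ) (hq : q ≠ 0) (hr : r ≠ 0)
    (hs : s ≠ 0) :
    (r * s)⁻¹ * ((1 + I * a / (q * r) * (I * b / (q * s))) /
        ((1 - (I * a / (q * r)) ^ 2) * (1 - (I * b / (q * s)) ^ 2))) =
      q ^ 2 * (q ^ 2 * r * s - a * b) / ((q ^ 2 * r ^ 2 + a ^ 2) * (q ^ 2 * s ^ 2 + b ^ 2)) := by
  have e1 : 1 - (I * a / (q * r)) ^ 2 = (q ^ 2 * r ^ 2 + a ^ 2) / (q * r) ^ 2 := by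
    field_simp; linear_combination (-a ^ 2) * I_sq
  have e2 : 1 - (I * b / (q * s)) ^ 2 = (q ^ 2 * s ^ 2 + b ^ 2) / (q * s) ^ 2 := by
    field_simp; linear_combination (-b ^ 2) * I_sq
  have e3 : 1 + I * a / (q * r) * (I * b / (q * s)) =
      (q ^ 2 * r * s - a * b) / (q ^ 2 * r * s) := by
    field_simp; linear_combination (a * b) * I_sq
  rw [e1, e2, e3]
  field_simp

theorem stmt_14_general (q : ℝ) (hq0 : 0 < q) (a b r s : ℂ)
    (ha : ‖a‖ < q * ‖r‖) (hb : ‖b‖ < q * ‖s‖) :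
    Summable (fun n : ℕ =>
        ‖(-1 : ℂ) ^ n * ((q : ℂ) ^ (2 * n))⁻¹ * ∑ k ∈ Finset.range (2 * n + 1),
            a ^ k * b ^ (2 * n - k) / (r ^ (k + 1) * s ^ (2 * n - k + 1))‖) ∧
      ∑' n : ℕ, ((-1 : ℂ) ^ n * ((q : ℂ) ^ (2 * n))⁻¹ * ∑ k ∈ Finset.range (2 * n + 1),
          a ^ k * b ^ (2 * n - k) / (r ^ (k + 1) * s ^ (2 * n - k + 1))) =
        (q : ℂ) ^ 2 * ((q : ℂ) ^ 2 * r * s - a * b) /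
          (((q : ℂ) ^ 2 * r ^ 2 + a ^ 2) * ((q : ℂ) ^ 2 * s ^ 2 + b ^ 2)) := by
  have hq : (q : ℂ) ≠ 0 := ofReal_ne_zero.mpr hq0.ne'
  have hr : r ≠ 0 := by rintro rfl; simp at ha; linarith [norm_nonneg a]
  have hs : s ≠ 0 := by rintro rfl; simp at hb; linarith [norm_nonneg b]
  have norm_lt_one {c d : ℂ} (h : ‖c‖ < q * ‖d‖) : ‖I * c / (q * d)‖ < 1 := by
    rw [norm_div, norm_mul, norm_mul, norm_I, one_mul, norm_real, Real.norm_of_nonneg hq0.le]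
    exact (div_lt_one ((norm_nonneg c).trans_lt h)).2 h
  have hw := norm_lt_one ha
  have hz := norm_lt_one hb
  have hterm := neg_one_pow_mul_inv_mul_sum_eq_hsymm₂ _ a b r s hq hr hs
  have hsum := (hasSum_hsymm₂_two_mul hw hz).mul_left (r * s)⁻¹
  rw [inv_mul_one_add_mul_div_eq _ a b r s hq hr hs] at hsum
  simp_rw [← hterm] at hsum
  refine ⟨?_, hsum.tsum_eq⟩
  simp_rw [hterm, norm_mul]
  exact ((summable_norm_hsymm₂ hw hz).comp_injective (mul_right_injective₀ two_ne_zero)).mul_left _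

theorem stmt_14 (q : ℝ) (hq0 : 0 < q) (hq1 : q < 1) (a b r s : ℂ)
    (ha : ‖a‖ < q * ‖r‖) (hb : ‖b‖ < q * ‖s‖) :
    Summable (fun n : ℕ =>
        ‖(-1 : ℂ) ^ n * ((q : ℂ) ^ (2 * n))⁻¹ * ∑ k ∈ Finset.range (2 * n + 1),
            a ^ k * b ^ (2 * n - k) / (r ^ (k + 1) * s ^ (2 * n - k + 1))‖) ∧
      ∑' n : ℕ, ((-1 : ℂ) ^ n * ((q : ℂ) ^ (2 * n))⁻¹ * ∑ k ∈ Finset.range (2 * n + 1),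
          a ^ k * b ^ (2 * n - k) / (r ^ (k + 1) * s ^ (2 * n - k + 1))) =
        (q : ℂ) ^ 2 * ((q : ℂ) ^ 2 * r * s - a * b) /
          (((q : ℂ) ^ 2 * r ^ 2 + a ^ 2) * ((q : ℂ) ^ 2 * s ^ 2 + b ^ 2)) :=
  stmt_14_general q hq0 a b r s ha hb
end

section
/- Let (a_n)_{n≥0} be a sequence of complex numbers whose power series H(u) = ∑_{n=0}^∞ a_n u^n has radius of convergence ρ, and let α, β, r, s be complex numbers with r ≠ 0, s ≠ 0, αs ≠ βr, |α/(qr)| < ρ and |β/(qs)| < ρ. Then the double series ∑_{n=0}^∞ a_n q^{−n} ∑_{k=0}^n α^k β^{n−k}/(r^{k+1} s^{n+1−k}) converges and equals (1/(αs − βr)) · ((α/r) H(α/(qr)) − (β/s) H(β/(qs))). -/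
open scoped ENNReal
open Finset

/-! With `u = α / r` and `v = β / s`, the inner sum is `(rs)⁻¹ ∑ₖ uᵏ vⁿ⁻ᵏ`, a finite geometric sum
equal to `(uⁿ⁺¹ - vⁿ⁺¹) / (αs - βr)`. The double series therefore splits termwise into the difference
of the two power series `∑ aₙ (u/q)ⁿ` and `∑ aₙ (v/q)ⁿ`, both evaluated inside the disc of
convergence. -/

theorem FormalMultilinearSeries.summable_ofScalars_mul_pow {𝕜 : Type*} [NontriviallyNormedField 𝕜]
    [CompleteSpace 𝕜] (a : ℕ → 𝕜) {x : 𝕜} (hx : (‖x‖₊ : ℝ≥0∞) < (ofScalars 𝕜 a).radius) :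
    Summable fun n => a n * x ^ n := by
  simpa only [ofScalars_apply_eq, smul_eq_mul] using
    (ofScalars 𝕜 a).summable (mem_eball_zero_iff.mpr hx)

theorem sum_range_pow_mul_pow_div_pow_mul_pow {K : Type*} [Field K] {α β r s : K}
    (hr : r ≠ 0) (hs : s ≠ 0) (h : α * s ≠ β * r) (n : ℕ) :
    ∑ k ∈ range (n + 1), α ^ k * β ^ (n - k) / (r ^ (k + 1) * s ^ (n + 1 - k)) =
      ((α / r) ^ (n + 1) - (β / s) ^ (n + 1)) / (α * s - β * r) := by
  have hquot : α / r ≠ β / s := by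
    rwa [Ne, div_eq_div_iff hr hs]
  have hterm : ∀ k ∈ range (n + 1), α ^ k * β ^ (n - k) / (r ^ (k + 1) * s ^ (n + 1 - k)) =
      (α / r) ^ k * (β / s) ^ (n - k) / (r * s) := by
    intro k hk
    rw [Nat.succ_sub (mem_range_succ_iff.mp hk), div_pow, div_pow, pow_succ, pow_succ]
    ring
  have hgeom := geom₂_sum hquot (n + 1)
  rw [Nat.add_sub_cancel] at hgeom
  rw [sum_congr rfl hterm, ← sum_div, hgeom]
  field_simp

theorem stmt_16_general (q : ℝ) (a : ℕ → ℂ) (ρ : ℝ≥0∞)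
    (hρ : (FormalMultilinearSeries.ofScalars ℂ a).radius = ρ)
    (α β r s : ℂ) (hr : r ≠ 0) (hs : s ≠ 0) (h : α * s ≠ β * r)
    (hα : (‖α / ((q : ℂ) * r)‖₊ : ℝ≥0∞) < ρ) (hβ : (‖β / ((q : ℂ) * s)‖₊ : ℝ≥0∞) < ρ) :
    HasSum
      (fun n : ℕ => a n * ((q : ℂ) ^ n)⁻¹ *
        ∑ k ∈ Finset.range (n + 1), α ^ k * β ^ (n - k) / (r ^ (k + 1) * s ^ (n + 1 - k)))
      ((1 / (α * s - β * r)) *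
        ((α / r) * (∑' n : ℕ, a n * (α / ((q : ℂ) * r)) ^ n) -
          (β / s) * ∑' n : ℕ, a n * (β / ((q : ℂ) * s)) ^ n)) := by
  subst hρ
  have hsumα := (FormalMultilinearSeries.summable_ofScalars_mul_pow a hα).hasSum
  have hsumβ := (FormalMultilinearSeries.summable_ofScalars_mul_pow a hβ).hasSum
  refine (((hsumα.mul_left (α / r)).sub (hsumβ.mul_left (β / s))).mul_left
    (1 / (α * s - β * r))).congr_fun fun n => ?_
  rw [sum_range_pow_mul_pow_div_pow_mul_pow hr hs h]
  ring

theorem stmt_16 (q : ℝ) (hq0 : 0 < q) (hq1 : q < 1) (a : ℕ → ℂ) (ρ : ℝ≥0∞)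
    (hρ : (FormalMultilinearSeries.ofScalars ℂ a).radius = ρ)
    (α β r s : ℂ) (hr : r ≠ 0) (hs : s ≠ 0) (h : α * s ≠ β * r)
    (hα : (‖α / ((q : ℂ) * r)‖₊ : ℝ≥0∞) < ρ) (hβ : (‖β / ((q : ℂ) * s)‖₊ : ℝ≥0∞) < ρ) :
    HasSum
      (fun n : ℕ => a n * ((q : ℂ) ^ n)⁻¹ *
        ∑ k ∈ Finset.range (n + 1), α ^ k * β ^ (n - k) / (r ^ (k + 1) * s ^ (n + 1 - k)))
      ((1 / (α * s - β * r)) *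
        ((α / r) * (∑' n : ℕ, a n * (α / ((q : ℂ) * r)) ^ n) -
          (β / s) * ∑' n : ℕ, a n * (β / ((q : ℂ) * s)) ^ n)) :=
  stmt_16_general q a ρ hρ α β r s hr hs h hα hβ
end
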